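/- If η has strict priorities and the vacancy function 𝒱 is weakly decreasing in its first argument, then for any (η, 𝒱)-stable outcome (M, I, A), any school h ∈ H, and any p ∈ [0,1], ∫ 1(p_h^θ > p) M_h(θ) dη(θ) = ∫₀^{I_h(p)} 𝒱(λ, C_h) dλ. -/

import Mathlib

open MeasureTheory Filter
open scoped Classical ENNReal

noncomputable section

/-- A student type: a complete (linear) order on `Option H` (`none` is the outside option `∅`),
together with a priority score in `[0,1]` at each school. -/
abbrev Student (H : Type*) := LinearOrder (Option H) × (H → unitInterval)

instance (H : Type*) : MeasurableSpace (LinearOrder (Option H)) := ⊤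
instance (H : Type*) : TopologicalSpace (LinearOrder (Option H)) := ⊥

/-- `Prefers θ a b` : student `θ` strictly prefers option `a` to option `b`. -/
def Prefers {H : Type*} (θ : Student H) (a b : Option H) : Prop := θ.1.lt b a

/-- Priority of `θ` at option `h` (junk value `1` at the outside option). -/
def priOf {H : Type*} (θ : Student H) : Option H → unitInterval := fun o => o.elim 1 θ.2

abbrev MatchingFun (H : Type*) := Student H → Option H → ℝ
abbrev InterestFun (H : Type*) := H → unitInterval → ℝ
abbrev AdmissionsFun (H : Type*) := Option H → unitInterval → ℝ

section Defs
variable {H : Type*} [Fintype H]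

/-- `M` maps each student to a probability distribution over `Option H`. -/
def IsMatchingFun (M : MatchingFun H) : Prop :=
  ∀ θ : Student H, (∀ h, 0 ≤ M θ h) ∧ ∑ h : Option H, M θ h = 1

/-- Interest functions are componentwise weakly decreasing and nonnegative. -/
def IsInterestFun (I : InterestFun H) : Prop :=
  ∀ h, Antitone (I h) ∧ ∀ p, 0 ≤ I h p

/-- Admissions functions are componentwise weakly increasing with values in `[0,1]`,
and everyone is always admitted to the outside option. -/
def IsAdmissionsFun (A : AdmissionsFun H) : Prop :=
  (∀ h, Monotone (A h) ∧ ∀ p, A h p ∈ Set.Icc (0:ℝ) 1) ∧ ∀ p, A none p = 1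

/-- The interest function `𝓘(M)` of a matching `M`. -/
def interestOf (η : Measure (Student H)) (M : MatchingFun H) : InterestFun H :=
  fun h p => ∫ θ, (if p ≤ θ.2 h then (1:ℝ) else 0) *
    (1 - ∑ h' ∈ Finset.univ.filter (fun h' : Option H => Prefers θ h' (some h)), M θ h') ∂η

/-- The admissions function `𝓐(I)` of an interest function `I`, given a vacancy function `V`
and capacities `C`. -/
def admissionsOf (V : ℝ → ℕ → ℝ) (C : H → ℕ) (I : InterestFun H) : AdmissionsFun H :=
  fun h p => h.elim 1 fun h0 => V (I h0 p) (C h0)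

/-- The matching `𝓜(A)` of an admissions function `A`. -/
def matchingOf (A : AdmissionsFun H) : MatchingFun H := fun θ h =>
  A h (priOf θ h) *
    ∏ h' ∈ Finset.univ.filter (fun h' : Option H => Prefers θ h' h), (1 - A h' (priOf θ h'))

/-- A matching `M` is `(η, V)`-stable if `M = 𝓜(𝓐(𝓘(M)))`. -/
def StableMatching (η : Measure (Student H)) (V : ℝ → ℕ → ℝ) (C : H → ℕ)
    (M : MatchingFun H) : Prop :=
  IsMatchingFun M ∧ M = matchingOf (admissionsOf V C (interestOf η M))

/-- An interest function `I` is `(η, V)`-stable if `I = 𝓘(𝓜(𝓐(I)))`. -/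
def StableInterest (η : Measure (Student H)) (V : ℝ → ℕ → ℝ) (C : H → ℕ)
    (I : InterestFun H) : Prop :=
  IsInterestFun I ∧ I = interestOf η (matchingOf (admissionsOf V C I))

/-- An admissions function `A` is `(η, V)`-stable if `A = 𝓐(𝓘(𝓜(A)))`. -/
def StableAdmissions (η : Measure (Student H)) (V : ℝ → ℕ → ℝ) (C : H → ℕ)
    (A : AdmissionsFun H) : Prop :=
  IsAdmissionsFun A ∧ A = admissionsOf V C (interestOf η (matchingOf A))

/-- An outcome `(M, I, A)` is `(η, V)`-stable. -/
def StableOutcome (η : Measure (Student H)) (V : ℝ → ℕ → ℝ) (C : H → ℕ)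
    (M : MatchingFun H) (I : InterestFun H) (A : AdmissionsFun H) : Prop :=
  IsMatchingFun M ∧ IsInterestFun I ∧ IsAdmissionsFun A ∧
  M = matchingOf A ∧ I = interestOf η M ∧ A = admissionsOf V C I

/-- The deterministic vacancy function `V^det(λ, C) = 1(λ < C)`. -/
def Vdet : ℝ → ℕ → ℝ := fun lam C => if lam < (C : ℝ) then 1 else 0

/-- The Poisson vacancy function `V^pois(λ, C) = Σ_{k<C} e^{-λ} λ^k / k!`. -/
def Vpois : ℝ → ℕ → ℝ := fun lam C =>
  ∑ k ∈ Finset.range C, Real.exp (-lam) * lam ^ k / (Nat.factorial k : ℝ)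

/-- A measure `η` on student types has strict priorities. -/
def StrictPriorities (η : Measure (Student H)) : Prop :=
  ∀ (h : H) (p : unitInterval), η {θ : Student H | Prefers θ (some h) none ∧ θ.2 h = p} = 0

end Defs

/-! Fix a school `h`. Student `θ` reaches `h` with probability
`D θ = ∏_{h' ≻θ h} (1 - A_{h'}(p_{h'}^θ))`, and the telescoping identity
`∑ₐ fₐ ∏_{b > a} (1 - f_b) = 1 - ∏ₐ (1 - fₐ)` turns `I_h(q)` into `∫ 1(p_h^θ ≥ q) D dη`.
Strict priorities make the weighted measure `D dη` atomless along `p_h`, so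
`I_h(q) = F(q) := ∫ 1(p_h^θ > q) D dη` and `F` is continuous; the left-hand side is
`G(p) = ∫ 1(p_h^θ > p) V(F(p_h^θ)) D dη`.

Over `q ≤ r`, both `G(q) - G(r)` and `∫_{F(r)}^{F(q)} V` lie between `V(F(q))·(F(q) - F(r))` and
`V(F(r))·(F(q) - F(r))`, so `Ψ = G - ∫_0^F V` moves by at most `(A(r) - A(q))·(F(q) - F(r))`.
Summing along a partition of `[p, 1]` on whose steps `F` varies by less than `ε` gives
`|Ψ(p) - Ψ(1)| ≤ (A(1) - A(p))·ε`, and `Ψ(1) = 0`. -/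

open Set

theorem Finset.sum_mul_prod_one_sub_filter_lt {α R : Type*} [LinearOrder α] [CommRing R]
    (S : Finset α) (f : α → R) :
    ∑ a ∈ S, f a * ∏ b ∈ S with a < b, (1 - f b) = 1 - ∏ a ∈ S, (1 - f a) := by
  induction S using Finset.induction_on_min with
  | empty => simp
  | insert a s ha ih =>
    have has : a ∉ s := fun h => lt_irrefl a (ha a h)
    have hfa : (insert a s).filter (a < ·) = s := by
      rw [Finset.filter_insert, if_neg (lt_irrefl a), Finset.filter_true_of_mem ha]
    have hfx : ∀ x ∈ s, (insert a s).filter (x < ·) = s.filter (x < ·) := fun x hx => by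
      rw [Finset.filter_insert, if_neg (ha x hx).not_gt]
    rw [Finset.sum_insert has, Finset.prod_insert has, hfa, Finset.sum_congr rfl
      fun x hx => by rw [hfx x hx], ih]
    ring

theorem abs_sub_le_mul_of_chain {α : Type*} [Preorder α] {Ψ A F : α → ℝ} {ε : ℝ}
    (hA : Monotone A) (hΨ : ∀ q r, q ≤ r → |Ψ q - Ψ r| ≤ (A r - A q) * dist (F q) (F r))
    {t : ℕ → α} (ht : Monotone t) (hF : ∀ n, dist (F (t n)) (F (t (n + 1))) ≤ ε) (N : ℕ) :
    |Ψ (t 0) - Ψ (t N)| ≤ (A (t N) - A (t 0)) * ε := by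
  induction N with
  | zero => simp
  | succ N ih =>
    have hstep : |Ψ (t N) - Ψ (t (N + 1))| ≤ (A (t (N + 1)) - A (t N)) * ε :=
      (hΨ _ _ (ht N.le_succ)).trans <|
        mul_le_mul_of_nonneg_left (hF N) (sub_nonneg.2 (hA (ht N.le_succ)))
    linarith [abs_sub_le (Ψ (t 0)) (Ψ (t N)) (Ψ (t (N + 1)))]

theorem Set.Icc.eq_of_abs_sub_le_mul_dist {a b : ℝ} {Ψ A F : Icc a b → ℝ} (hA : Monotone A)
    (hF : Continuous F) (hΨ : ∀ q r, q ≤ r → |Ψ q - Ψ r| ≤ (A r - A q) * dist (F q) (F r))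
    {q r : Icc a b} (hqr : q ≤ r) : Ψ q = Ψ r := by
  have hab : a ≤ b := q.2.1.trans q.2.2
  have hd : (0 : ℝ) ≤ r - q := sub_nonneg.2 hqr
  have hsmall : ∀ ε > 0, |Ψ q - Ψ r| ≤ (A r - A q) * ε := by
    intro ε hε
    obtain ⟨δ, hδ, hFδ⟩ :=
      Metric.uniformContinuous_iff.1 (CompactSpace.uniformContinuous_of_continuous hF) ε hε
    obtain ⟨N, hN⟩ := exists_nat_gt ((r - q) / δ)
    have hN0 : (0 : ℝ) < N := (div_nonneg hd hδ.le).trans_lt hN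
    let t : ℕ → Icc a b := fun n => projIcc a b hab (q + n * ((r - q) / N))
    have ht : Monotone t := fun m n hmn => monotone_projIcc hab <| by
      gcongr
    have htN : t N = r := by
      simp only [t, mul_div_cancel₀ _ hN0.ne', add_sub_cancel, projIcc_val]
    have hdist : ∀ n, dist (t n) (t (n + 1)) < δ := fun n => by
      rw [Subtype.dist_eq, Real.dist_eq]
      refine (abs_projIcc_sub_projIcc hab).trans_lt ?_
      rw [abs_sub_comm, Nat.cast_succ, add_sub_add_left_eq_sub, ← sub_mul, add_sub_cancel_left,
        one_mul, abs_of_nonneg (div_nonneg hd hN0.le), div_lt_iff₀ hN0, mul_comm]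
      exact (div_lt_iff₀ hδ).1 hN
    have := abs_sub_le_mul_of_chain hA hΨ ht (fun n => (hFδ (hdist n)).le) N
    rwa [htN, show t 0 = q by simp [t]] at this
  refine eq_of_sub_eq_zero (abs_nonpos_iff.1 (le_of_forall_pos_le_add fun ε hε => ?_))
  have hc : 0 ≤ A r - A q := sub_nonneg.2 (hA hqr)
  calc |Ψ q - Ψ r| ≤ (A r - A q) * (ε / (A r - A q + 1)) := hsmall _ (by positivity)
    _ ≤ 0 + ε := by
      rw [zero_add, mul_div_assoc', div_le_iff₀ (by positivity)]
      nlinarith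

theorem AntitoneOn.intervalIntegral_mem_Icc {V : ℝ → ℝ} {x y : ℝ} (hxy : x ≤ y)
    (hV : AntitoneOn V (Icc x y)) :
    ∫ t in x..y, V t ∈ Icc (V y * (y - x)) (V x * (y - x)) := by
  have hint : IntervalIntegrable V MeasureTheory.volume x y :=
    (uIcc_of_le hxy ▸ hV).intervalIntegrable
  constructor
  · calc V y * (y - x) = ∫ _ in x..y, V y := by simp [mul_comm]
      _ ≤ ∫ t in x..y, V t := intervalIntegral.integral_mono_on hxy intervalIntegrable_const hint
          fun t ht => hV ht (right_mem_Icc.2 hxy) ht.2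
  · calc ∫ t in x..y, V t ≤ ∫ _ in x..y, V x :=
          intervalIntegral.integral_mono_on hxy hint intervalIntegrable_const
            fun t ht => hV (left_mem_Icc.2 hxy) ht ht.1
      _ = V x * (y - x) := by simp [mul_comm]

section WeightedTail

variable {X α : Type*} [MeasurableSpace X] {μ : Measure X} [LinearOrder α] {s : X → α}
  {f w : X → ℝ}

def weightedTail (μ : Measure X) (s : X → α) (f : X → ℝ) (q : α) : ℝ :=
  ∫ x in s ⁻¹' Ioi q, f x ∂μ

theorem weightedTail_nonneg (hf : 0 ≤ f) (q : α) : 0 ≤ weightedTail μ s f q :=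
  integral_nonneg hf

theorem weightedTail_of_isMax {q : α} (hq : IsMax q) : weightedTail μ s f q = 0 := by
  simp [weightedTail, hq.Ioi_eq]

variable [TopologicalSpace α] [OrderClosedTopology α] [MeasurableSpace α]
  [OpensMeasurableSpace α]

theorem weightedTail_sub_weightedTail (hs : Measurable s) (hf : Integrable f μ) {q r : α}
    (hqr : q ≤ r) :
    weightedTail μ s f q - weightedTail μ s f r = ∫ x in s ⁻¹' Ioc q r, f x ∂μ := by
  rw [weightedTail, weightedTail, ← setIntegral_sdiff (hs measurableSet_Ioi) hf.integrableOn
    (preimage_mono (Ioi_subset_Ioi hqr)), ← preimage_sdiff, Ioi_sdiff_Ioi]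

theorem antitone_weightedTail (hs : Measurable s) (hf : Integrable f μ) (hf0 : 0 ≤ f) :
    Antitone (weightedTail μ s f) := fun q r hqr => by
  have := weightedTail_sub_weightedTail hs hf hqr
  linarith [integral_nonneg (μ := μ.restrict (s ⁻¹' Ioc q r)) hf0]

theorem weightedTail_mul_sub_mem_Icc (hs : Measurable s) (hw : Integrable w μ) (hw0 : 0 ≤ w)
    {c : α → ℝ} (hc : Monotone c) (hcw : Integrable (fun x => c (s x) * w x) μ) {q r : α}
    (hqr : q ≤ r) :
    weightedTail μ s (fun x => c (s x) * w x) q - weightedTail μ s (fun x => c (s x) * w x) r ∈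
      Icc (c q * (weightedTail μ s w q - weightedTail μ s w r))
        (c r * (weightedTail μ s w q - weightedTail μ s w r)) := by
  have hE : MeasurableSet (s ⁻¹' Ioc q r) := hs measurableSet_Ioc
  simp only [weightedTail_sub_weightedTail hs hw hqr, weightedTail_sub_weightedTail hs hcw hqr,
    ← integral_const_mul]
  exact ⟨setIntegral_mono_on (hw.const_mul _).integrableOn hcw.integrableOn hE
      fun x hx => mul_le_mul_of_nonneg_right (hc hx.1.le) (hw0 x),
    setIntegral_mono_on hcw.integrableOn (hw.const_mul _).integrableOn hE
      fun x hx => mul_le_mul_of_nonneg_right (hc hx.2) (hw0 x)⟩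

theorem setIntegral_preimage_Ici_eq_weightedTail (hs : Measurable s) {q : α}
    (hatom : ∀ᵐ x ∂μ, s x = q → f x = 0) :
    ∫ x in s ⁻¹' Ici q, f x ∂μ = weightedTail μ s f q := by
  rw [weightedTail, ← integral_indicator (hs measurableSet_Ici),
    ← integral_indicator (hs measurableSet_Ioi)]
  refine integral_congr_ae (hatom.mono fun x hx => ?_)
  rcases eq_or_ne (s x) q with hxq | hxq
  · simp [indicator_apply, hx hxq]
  · simp [indicator_apply, hxq.symm.le_iff_lt]

theorem continuous_weightedTail [FirstCountableTopology α] (hs : Measurable s)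
    (hf : Integrable f μ) (hatom : ∀ q, ∀ᵐ x ∂μ, s x = q → f x = 0) :
    Continuous (weightedTail μ s f) := by
  have htail : weightedTail μ s f = fun q => ∫ x, (s ⁻¹' Ioi q).indicator f x ∂μ :=
    funext fun q => (integral_indicator (hs measurableSet_Ioi)).symm
  rw [htail, continuous_iff_continuousAt]
  intro q₀
  refine continuousAt_of_dominated
    (Eventually.of_forall fun q => (hf.indicator (hs measurableSet_Ioi)).aestronglyMeasurable)
    (Eventually.of_forall fun q => Eventually.of_forall fun x => norm_indicator_le_norm_self _ _)
    hf.norm ((hatom q₀).mono fun x hx => ?_)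
  rcases lt_trichotomy (s x) q₀ with hlt | heq | hgt
  · refine (continuousAt_const (y := (0 : ℝ))).congr
      (mem_of_superset (Ioi_mem_nhds hlt) fun q hq => ?_)
    simp [indicator_apply, (mem_Ioi.1 hq).le.not_gt]
  · simp [indicator_apply, hx heq, continuousAt_const]
  · refine (continuousAt_const (y := f x)).congr
      (mem_of_superset (Iio_mem_nhds hgt) fun q hq => ?_)
    simp [indicator_apply, mem_Iio.1 hq]

end WeightedTail

theorem weightedTail_comp_mul_eq_intervalIntegral {X : Type*} [MeasurableSpace X]
    {μ : Measure X} {a b : ℝ} {s : X → Icc a b} (hs : Measurable s) {w : X → ℝ}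
    (hw : Integrable w μ) (hw0 : 0 ≤ w) (hatom : ∀ q, ∀ᵐ x ∂μ, s x = q → w x = 0) {V : ℝ → ℝ}
    (hV : AntitoneOn V (Ici 0)) (q : Icc a b) :
    weightedTail μ s (fun x => V (weightedTail μ s w (s x)) * w x) q =
      ∫ t in 0..weightedTail μ s w q, V t := by
  set F := weightedTail μ s w
  have hF0 : ∀ q, 0 ≤ F q := weightedTail_nonneg hw0
  have hF : Antitone F := antitone_weightedTail hs hw hw0
  have hc : Monotone fun q => V (F q) := fun q r hqr => hV (hF0 r) (hF0 q) (hF hqr)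
  have hab : a ≤ b := q.2.1.trans q.2.2
  let bot : Icc a b := ⟨a, left_mem_Icc.2 hab⟩
  let top : Icc a b := ⟨b, right_mem_Icc.2 hab⟩
  have hcw : Integrable (fun x => V (F (s x)) * w x) μ :=
    hw.bdd_mul (c := max |V (F bot)| |V (F top)|) (hc.measurable.comp hs).aestronglyMeasurable
      (Eventually.of_forall fun x => abs_le_max_abs_abs (hc (s x).2.1) (hc (s x).2.2))
  have hVint : ∀ y, IntervalIntegrable V MeasureTheory.volume 0 (F y) := fun y =>
    (hV.mono fun t ht => (uIcc_of_le (hF0 y) ▸ ht).1).intervalIntegrable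
  let Ψ : Icc a b → ℝ := fun q =>
    weightedTail μ s (fun x => V (F (s x)) * w x) q - ∫ t in 0..F q, V t
  have hΨ : ∀ q r, q ≤ r → |Ψ q - Ψ r| ≤ (V (F r) - V (F q)) * dist (F q) (F r) := by
    intro q r hqr
    obtain ⟨hlo, hhi⟩ := weightedTail_mul_sub_mem_Icc hs hw hw0 hc hcw hqr
    obtain ⟨hVlo, hVhi⟩ :=
      (hV.mono fun t ht => (hF0 r).trans ht.1).intervalIntegral_mem_Icc (hF hqr)
    have hsplit := intervalIntegral.integral_interval_sub_left (hVint q) (hVint r)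
    rw [Real.dist_eq, abs_of_nonneg (sub_nonneg.2 (hF hqr)), abs_sub_le_iff]
    constructor <;> linarith
  have hΨtop : Ψ top = 0 := by
    have htop : IsMax top := fun y _ => y.2.2
    simp [Ψ, F, weightedTail_of_isMax htop]
  exact sub_eq_zero.1 (((Icc.eq_of_abs_sub_le_mul_dist hc
    (continuous_weightedTail hs hw hatom) hΨ (show q ≤ top from q.2.2))).trans hΨtop)

theorem integral_ite_one_mul {X : Type*} [MeasurableSpace X] {μ : Measure X} {P : X → Prop}
    [DecidablePred P] (hP : MeasurableSet {x | P x}) (f : X → ℝ) :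
    ∫ x, (if P x then 1 else 0) * f x ∂μ = ∫ x in {x | P x}, f x ∂μ := by
  rw [← integral_indicator hP]
  congr 1 with x
  simp [indicator_apply]

section Matching

variable {H : Type*} [Fintype H]

def rejectedAbove (A : AdmissionsFun H) (h : Option H) (θ : Student H) : ℝ :=
  ∏ h' ∈ Finset.univ.filter (fun h' : Option H => Prefers θ h' h), (1 - A h' (priOf θ h'))

theorem matchingOf_apply (A : AdmissionsFun H) (θ : Student H) (h : Option H) :
    matchingOf A θ h = A h (priOf θ h) * rejectedAbove A h θ :=
  rfl

theorem sum_matchingOf_filter_prefers (A : AdmissionsFun H) (θ : Student H) (h : Option H) :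
    ∑ h' ∈ Finset.univ.filter (fun h' : Option H => Prefers θ h' h), matchingOf A θ h' =
      1 - rejectedAbove A h θ := by
  let _ : LinearOrder (Option H) := θ.1
  rw [rejectedAbove, ← Finset.sum_mul_prod_one_sub_filter_lt]
  refine Finset.sum_congr rfl fun h' hh' => ?_
  rw [matchingOf_apply, rejectedAbove, Finset.filter_filter]
  congr 2
  ext h''
  simp only [Finset.mem_filter, Finset.mem_univ, true_and] at hh' ⊢
  exact ⟨fun hh'' => ⟨lt_trans hh' hh'', hh''⟩, And.right⟩

theorem interestOf_matchingOf (η : Measure (Student H)) (A : AdmissionsFun H) (h : H)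
    (q : unitInterval) :
    interestOf η (matchingOf A) h q =
      ∫ θ, (if q ≤ θ.2 h then 1 else 0) * rejectedAbove A (some h) θ ∂η := by
  simp only [interestOf, sum_matchingOf_filter_prefers, sub_sub_cancel]

variable {A : AdmissionsFun H}

theorem rejectedAbove_mem_Icc (hA : IsAdmissionsFun A) (h : Option H) (θ : Student H) :
    rejectedAbove A h θ ∈ Icc (0 : ℝ) 1 :=
  ⟨Finset.prod_nonneg fun o _ => sub_nonneg.2 ((hA.1 o).2 _).2,
    Finset.prod_le_one (fun o _ => sub_nonneg.2 ((hA.1 o).2 _).2)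
      fun o _ => sub_le_self _ ((hA.1 o).2 _).1⟩

theorem rejectedAbove_eq_zero (hA : ∀ p, A none p = 1) {h : H} {θ : Student H}
    (hθ : ¬Prefers θ (some h) none) : rejectedAbove A (some h) θ = 0 := by
  let _ : LinearOrder (Option H) := θ.1
  refine Finset.prod_eq_zero (i := none) ?_ (by simp [priOf, hA])
  simp only [Finset.mem_filter, Finset.mem_univ, true_and]
  exact lt_of_le_of_ne (not_lt.1 hθ) (Option.some_ne_none h)

theorem measurable_rejectedAbove (hA : ∀ o, Measurable (A o)) (h : Option H) :
    Measurable (rejectedAbove A h) := by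
  have hpri : ∀ o : Option H, Measurable fun θ : Student H => priOf θ o
    | none => measurable_const
    | some o => (measurable_pi_apply o).comp measurable_snd
  rw [show rejectedAbove A h = fun θ => ∏ o, if Prefers θ o h then 1 - A o (priOf θ o) else 1
    from funext fun θ => Finset.prod_filter _ _]
  refine Finset.measurable_prod _ fun o _ => Measurable.ite ?_ ?_ measurable_const
  · exact measurable_fst
      (MeasurableSpace.measurableSet_top (s := {L : LinearOrder (Option H) | L.lt h o}))
  · exact measurable_const.sub ((hA o).comp (hpri o))

theorem integrable_rejectedAbove {η : Measure (Student H)} [IsFiniteMeasure η]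
    (hA : IsAdmissionsFun A) (h : Option H) : Integrable (rejectedAbove A h) η :=
  (integrable_const (1 : ℝ)).mono'
    (measurable_rejectedAbove (fun o => (hA.1 o).1.measurable) h).aestronglyMeasurable
    (Eventually.of_forall fun θ => by
      obtain ⟨hnonneg, hle⟩ := rejectedAbove_mem_Icc hA h θ
      rwa [Real.norm_eq_abs, abs_of_nonneg hnonneg])

theorem ae_rejectedAbove_eq_zero {η : Measure (Student H)} (hη : StrictPriorities η)
    (hA : ∀ p, A none p = 1) (h : H) (q : unitInterval) :
    ∀ᵐ θ ∂η, θ.2 h = q → rejectedAbove A (some h) θ = 0 := by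
  refine measure_mono_null (fun θ hθ => ?_) (hη h q)
  by_contra hnot
  exact hθ fun hq => rejectedAbove_eq_zero hA fun hpref => hnot ⟨hpref, hq⟩

end Matching

theorem stmt8_general {H : Type*} [Fintype H] (V : ℝ → ℕ → ℝ)
    (hVmono : ∀ (c : ℕ) (x y : ℝ), 0 ≤ x → x ≤ y → V y c ≤ V x c)
    (C : H → ℕ) (η : Measure (Student H)) [IsFiniteMeasure η]
    (hη : StrictPriorities η)
    (M : MatchingFun H) (I : InterestFun H) (A : AdmissionsFun H)
    (h : StableOutcome η V C M I A) (h0 : H) (p : unitInterval) :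
    (∫ θ, (if p < θ.2 h0 then (1:ℝ) else 0) * M θ (some h0) ∂η) =
      ∫ x in (0:ℝ)..(I h0 p), V x (C h0) := by
  obtain ⟨-, -, hA, rfl, rfl, hAI⟩ := h
  set s : Student H → unitInterval := fun θ => θ.2 h0
  set w := rejectedAbove A (some h0)
  have hs : Measurable s := (measurable_pi_apply h0).comp measurable_snd
  have hatom := ae_rejectedAbove_eq_zero hη hA.2 h0
  have hI : ∀ q, interestOf η (matchingOf A) h0 q = weightedTail η s w q := fun q => by
    rw [interestOf_matchingOf, integral_ite_one_mul (P := fun θ : Student H => q ≤ θ.2 h0)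
      (hs (measurableSet_Ici (a := q)))]
    exact setIntegral_preimage_Ici_eq_weightedTail hs (hatom q)
  have hM : ∀ θ, matchingOf A θ (some h0) = V (weightedTail η s w (s θ)) (C h0) * w θ :=
    fun θ => by
      rw [matchingOf_apply, ← hI]
      exact congrArg (· * w θ) (congrFun (congrFun hAI (some h0)) (θ.2 h0))
  simp only [hM, hI]
  rw [integral_ite_one_mul (P := fun θ : Student H => p < θ.2 h0)
    (hs (measurableSet_Ioi (a := p)))]
  exact weightedTail_comp_mul_eq_intervalIntegral hs (integrable_rejectedAbove hA _)
    (fun θ => (rejectedAbove_mem_Icc hA _ θ).1) hatom (fun x hx y _ hxy => hVmono _ x y hx hxy) p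

/-- If `η` has strict priorities and the vacancy function `V : ℝ₊ × ℕ → [0,1]`
is weakly decreasing in its first argument, then for any `(η, V)`-stable outcome `(M, I, A)`, any
school `h` and any `p ∈ [0,1]`,
`∫ 1(p_h^θ > p) M_h(θ) dη(θ) = ∫₀^{I_h(p)} V(λ, C_h) dλ`. -/
theorem stmt8 {H : Type*} [Fintype H] (V : ℝ → ℕ → ℝ)
    (hVrange : ∀ (x : ℝ) (c : ℕ), 0 ≤ x → V x c ∈ Set.Icc (0:ℝ) 1)
    (hVmono : ∀ (c : ℕ) (x y : ℝ), 0 ≤ x → x ≤ y → V y c ≤ V x c)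
    (C : H → ℕ) (η : Measure (Student H)) [IsFiniteMeasure η]
    (hη : StrictPriorities η)
    (M : MatchingFun H) (I : InterestFun H) (A : AdmissionsFun H)
    (h : StableOutcome η V C M I A) (h0 : H) (p : unitInterval) :
    (∫ θ, (if p < θ.2 h0 then (1:ℝ) else 0) * M θ (some h0) ∂η) =
      ∫ x in (0:ℝ)..(I h0 p), V x (C h0) :=
  stmt8_general V hVmono C η hη M I A h h0 p
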